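/- arXiv:2406.17331 — 2 statements merged into one kernel-verified Lean document; each statement's English description precedes it below -/
import Mathlib

section
/- The number of semi-standard Young tableaux of shape k×2 (two columns of length k, i.e., pairs of weakly increasing comparable k-subsets) with entries in {1,...,n} equals ((n+1)(n-k+1)/(k+1)) · ∏_{i=0}^{k-2} (n-i)²/(k-i)². -/
/-!
Encode a tableau by its two columns `A`, `B` (as `k`-subsets of `Fin n`); the row condition says
that for every threshold `m`, `B` has at most as many elements below `m` as `A`. Among all
`C(n,k)²` pairs of `k`-subsets, those violating this are in bijection with the pairs of sizes
`k - 1` and `k + 1`: at the first threshold where `B` has one element more below it than `A`, swap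
the parts of `A` and `B` above it (André's reflection, as in the Lindström–Gessel–Viennot
lemma). Hence the tableaux number `C(n,k)² - C(n,k-1)·C(n,k+1)`, which is the stated product.
-/

open Finset Nat

namespace TwoColumnSSYT

variable {n : ℕ}

def prefixCard (s : Finset (Fin n)) (m : ℕ) : ℕ := #(s.filter fun x : Fin n => (x : ℕ) < m)

lemma prefixCard_zero (s : Finset (Fin n)) : prefixCard s 0 = 0 := by
  simp [prefixCard]

lemma prefixCard_mono (s : Finset (Fin n)) {m m' : ℕ} (h : m ≤ m') :
    prefixCard s m ≤ prefixCard s m' :=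
  card_le_card <| monotone_filter_right s fun _ _ hx => hx.trans_le h

lemma prefixCard_le_card (s : Finset (Fin n)) (m : ℕ) : prefixCard s m ≤ #s :=
  card_filter_le _ _

lemma prefixCard_of_le (s : Finset (Fin n)) {m : ℕ} (h : n ≤ m) : prefixCard s m = #s := by
  rw [prefixCard, filter_true_of_mem fun x _ => x.isLt.trans_le h]

lemma prefixCard_succ_le (s : Finset (Fin n)) (m : ℕ) :
    prefixCard s (m + 1) ≤ prefixCard s m + 1 := by
  have hle : #(s.filter fun x : Fin n => (x : ℕ) = m) ≤ 1 :=
    card_le_one.2 fun x hx y hy => Fin.ext <| (mem_filter.1 hx).2.trans (mem_filter.1 hy).2.symm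
  simp only [prefixCard, Nat.lt_succ_iff_lt_or_eq, filter_or]
  exact (card_union_le _ _).trans (Nat.add_le_add_left hle _)

/-- `A` dominates `B` when, listed increasingly, the elements of `A` are pointwise at most those
of `B` (see `dominates_image_iff`). -/
def Dominates (A B : Finset (Fin n)) : Prop := ∀ m, prefixCard B m ≤ prefixCard A m

lemma not_dominates_iff {A B : Finset (Fin n)} :
    ¬ Dominates A B ↔ ∃ m, prefixCard A m < prefixCard B m := by
  simp [Dominates]

lemma exists_prefixCard_lt_of_card_lt {A B : Finset (Fin n)} (h : #A < #B) :
    ∃ m, prefixCard A m < prefixCard B m :=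
  ⟨n, by rwa [prefixCard_of_le A le_rfl, prefixCard_of_le B le_rfl]⟩

lemma prefixCard_find_eq_succ {A B : Finset (Fin n)}
    (h : ∃ m, prefixCard A m < prefixCard B m) :
    prefixCard B (Nat.find h) = prefixCard A (Nat.find h) + 1 := by
  obtain ⟨t, ht⟩ : ∃ t, Nat.find h = t + 1 :=
    Nat.exists_eq_succ_of_ne_zero fun h0 => by simpa [h0, prefixCard_zero] using Nat.find_spec h
  have hlt : prefixCard A (t + 1) < prefixCard B (t + 1) := ht ▸ Nat.find_spec h
  have hge : prefixCard B t ≤ prefixCard A t := not_lt.1 <| Nat.find_min h (by omega)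
  have := prefixCard_succ_le B t
  have := prefixCard_mono A (Nat.le_add_right t 1)
  rw [ht]
  omega

def splice (τ : ℕ) (A B : Finset (Fin n)) : Finset (Fin n) :=
  A.filter (fun x : Fin n => (x : ℕ) < τ) ∪ B.filter (fun x : Fin n => τ ≤ (x : ℕ))

lemma prefixCard_splice {τ m : ℕ} (h : m ≤ τ) (A B : Finset (Fin n)) :
    prefixCard (splice τ A B) m = prefixCard A m := by
  unfold prefixCard splice
  congr 1
  ext x
  simp only [mem_filter, mem_union]
  grind

lemma card_splice (τ : ℕ) (A B : Finset (Fin n)) :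
    #(splice τ A B) = prefixCard A τ + (#B - prefixCard B τ) := by
  rw [splice, card_union_of_disjoint <| disjoint_left.2 fun x h₁ h₂ => by
    simp only [mem_filter] at h₁ h₂; omega]
  have := card_filter_add_card_filter_not (s := B) (fun x : Fin n => (x : ℕ) < τ)
  simp only [not_lt] at this
  rw [prefixCard, prefixCard]
  omega

lemma splice_splice (τ : ℕ) (A B : Finset (Fin n)) :
    splice τ (splice τ A B) (splice τ B A) = A := by
  ext x
  simp only [splice, mem_filter, mem_union]
  grind

open Classical in
noncomputable def swapTails (p : Finset (Fin n) × Finset (Fin n)) :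
    Finset (Fin n) × Finset (Fin n) :=
  if h : ∃ m, prefixCard p.1 m < prefixCard p.2 m then
    (splice (Nat.find h) p.1 p.2, splice (Nat.find h) p.2 p.1)
  else p

lemma swapTails_of_exists {p : Finset (Fin n) × Finset (Fin n)}
    (h : ∃ m, prefixCard p.1 m < prefixCard p.2 m) :
    swapTails p = (splice (Nat.find h) p.1 p.2, splice (Nat.find h) p.2 p.1) :=
  dif_pos h

lemma find_swapTails {p : Finset (Fin n) × Finset (Fin n)}
    (h : ∃ m, prefixCard p.1 m < prefixCard p.2 m) :
    ∃ h' : ∃ m, prefixCard (swapTails p).1 m < prefixCard (swapTails p).2 m,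
      Nat.find h' = Nat.find h := by
  have hagree : ∀ m ≤ Nat.find h,
      (prefixCard (swapTails p).1 m < prefixCard (swapTails p).2 m ↔
        prefixCard p.1 m < prefixCard p.2 m) := fun m hm => by
    rw [swapTails_of_exists h, prefixCard_splice hm, prefixCard_splice hm]
  have h' : ∃ m, prefixCard (swapTails p).1 m < prefixCard (swapTails p).2 m :=
    ⟨Nat.find h, (hagree _ le_rfl).2 (Nat.find_spec h)⟩
  refine ⟨h', (Nat.find_eq_iff h').2
    ⟨(hagree _ le_rfl).2 (Nat.find_spec h), fun m hm => ?_⟩⟩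
  exact (hagree m hm.le).not.2 (Nat.find_min h hm)

lemma swapTails_swapTails (p : Finset (Fin n) × Finset (Fin n)) :
    swapTails (swapTails p) = p := by
  by_cases h : ∃ m, prefixCard p.1 m < prefixCard p.2 m
  · obtain ⟨h', hfind⟩ := find_swapTails h
    rw [swapTails_of_exists h', hfind, swapTails_of_exists h, splice_splice, splice_splice]
  · have hp : swapTails p = p := dif_neg h
    rw [hp, hp]

lemma card_swapTails {p : Finset (Fin n) × Finset (Fin n)}
    (h : ∃ m, prefixCard p.1 m < prefixCard p.2 m) :
    #(swapTails p).1 + 1 = #p.2 ∧ #(swapTails p).2 = #p.1 + 1 := by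
  rw [swapTails_of_exists h, card_splice, card_splice]
  have := prefixCard_find_eq_succ h
  have := prefixCard_le_card p.1 (Nat.find h)
  have := prefixCard_le_card p.2 (Nat.find h)
  constructor <;> omega

open Classical in
theorem card_filter_not_dominates {a b : ℕ} (hba : b ≤ a) :
    #{p ∈ powersetCard a (univ : Finset (Fin n)) ×ˢ powersetCard (b + 1) univ |
        ¬ Dominates p.1 p.2} = n.choose b * n.choose (a + 1) := by
  have hcard : n.choose b * n.choose (a + 1) =
      #(powersetCard b (univ : Finset (Fin n)) ×ˢ
        powersetCard (a + 1) (univ : Finset (Fin n))) := by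
    simp [card_product]
  rw [hcard]
  refine card_nbij' swapTails swapTails (fun p hp => ?_) (fun p hp => ?_)
    (fun p _ => swapTails_swapTails p) (fun p _ => swapTails_swapTails p)
  · simp only [coe_filter, Set.mem_ofPred_eq, mem_coe, mem_product, mem_powersetCard,
      subset_univ, true_and, not_dominates_iff] at hp ⊢
    obtain ⟨⟨hA, hB⟩, h⟩ := hp
    have := card_swapTails h
    omega
  · simp only [coe_filter, Set.mem_ofPred_eq, mem_coe, mem_product, mem_powersetCard,
      subset_univ, true_and, not_dominates_iff] at hp ⊢
    obtain ⟨hA, hB⟩ := hp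
    have h := exists_prefixCard_lt_of_card_lt (A := p.1) (B := p.2) (by omega)
    have := card_swapTails h
    obtain ⟨h', -⟩ := find_swapTails h
    exact ⟨⟨by omega, by omega⟩, h'⟩

open Classical in
theorem card_filter_dominates_add {k : ℕ} (hk : 0 < k) :
    #{p ∈ powersetCard k (univ : Finset (Fin n)) ×ˢ powersetCard k univ | Dominates p.1 p.2} +
      n.choose (k - 1) * n.choose (k + 1) = n.choose k * n.choose k := by
  obtain ⟨j, rfl⟩ : ∃ j, k = j + 1 := ⟨k - 1, by omega⟩
  rw [Nat.add_sub_cancel, ← card_filter_not_dominates (Nat.le_succ j),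
    card_filter_add_card_filter_not]
  simp [card_product]

lemma prefixCard_image {k : ℕ} {a : Fin k → Fin n} (ha : Function.Injective a) (m : ℕ) :
    prefixCard (univ.image a) m = #{i | (a i : ℕ) < m} := by
  rw [prefixCard, filter_image, card_image_of_injective _ ha]

theorem dominates_image_iff {k : ℕ} {a b : Fin k → Fin n} (ha : StrictMono a)
    (hb : StrictMono b) : Dominates (univ.image a) (univ.image b) ↔ ∀ i, a i ≤ b i := by
  simp only [Dominates, prefixCard_image ha.injective, prefixCard_image hb.injective]
  refine ⟨fun h i => ?_, fun h m => card_le_card fun j => ?_⟩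
  · by_contra! hlt
    have hA : ({j | (a j : ℕ) < a i} : Finset (Fin k)) = Iio i := by
      ext j
      simp [Fin.val_fin_lt, ha.lt_iff_lt]
    have hB : Iic i ⊆ ({j | (b j : ℕ) < a i} : Finset (Fin k)) := fun j hj => by
      simp only [mem_Iic] at hj
      simpa using (hb.monotone hj).trans_lt hlt
    have := (card_le_card hB).trans (h (a i))
    rw [hA, Fin.card_Iic, Fin.card_Iio] at this
    omega
  · simp only [mem_filter, mem_univ, true_and]
    exact (Fin.val_le_of_le (h j)).trans_lt

lemma eq_of_image_univ_eq {α : Type*} [LinearOrder α] {k : ℕ} {f g : Fin k → α}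
    (hf : StrictMono f) (hg : StrictMono g) (h : univ.image f = univ.image g) : f = g := by
  rw [← hf.range_inj hg, ← Set.image_univ, ← Set.image_univ, ← coe_univ, ← coe_image,
    ← coe_image, h]

open Classical in
theorem card_tableaux (k : ℕ) :
    Nat.card {p : (Fin k → Fin n) × (Fin k → Fin n) //
        StrictMono p.1 ∧ StrictMono p.2 ∧ ∀ i, p.1 i ≤ p.2 i} =
      #{p ∈ powersetCard k (univ : Finset (Fin n)) ×ˢ powersetCard k univ |
        Dominates p.1 p.2} := by
  rw [Nat.card_eq_fintype_card, Fintype.card_subtype]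
  refine card_nbij (fun p => (univ.image p.1, univ.image p.2)) (fun p hp => ?_)
    (fun p hp q hq hpq => ?_) (fun q hq => ?_)
  · simp only [coe_filter, Set.mem_ofPred_eq, mem_univ, true_and] at hp
    obtain ⟨h1, h2, h12⟩ := hp
    simpa [card_image_of_injective _ h1.injective, card_image_of_injective _ h2.injective,
      dominates_image_iff h1 h2] using h12
  · simp only [coe_filter, Set.mem_ofPred_eq, mem_univ, true_and] at hp hq
    simp only [Prod.mk.injEq] at hpq
    exact Prod.ext (eq_of_image_univ_eq hp.1 hq.1 hpq.1)
      (eq_of_image_univ_eq hp.2.1 hq.2.1 hpq.2)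
  · simp only [coe_filter, Set.mem_ofPred_eq, mem_product, mem_powersetCard, subset_univ,
      true_and] at hq
    obtain ⟨⟨h1, h2⟩, hdom⟩ := hq
    refine ⟨(q.1.orderEmbOfFin h1, q.2.orderEmbOfFin h2), ?_, ?_⟩
    · simp only [coe_filter, Set.mem_ofPred_eq, mem_univ, true_and]
      refine ⟨OrderEmbedding.strictMono _, OrderEmbedding.strictMono _, ?_⟩
      rw [← dominates_image_iff (OrderEmbedding.strictMono _) (OrderEmbedding.strictMono _)]
      simpa using hdom
    · simp

end TwoColumnSSYT

lemma prod_range_cast_sub_eq_descFactorial {R : Type*} [CommRing R] {n j : ℕ} (h : j ≤ n) :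
    ∏ i ∈ range j, ((n : R) - i) = n.descFactorial j := by
  rw [Nat.descFactorial_eq_prod_range, Nat.cast_prod]
  exact prod_congr rfl fun i hi => by rw [Nat.cast_sub (by simp at hi; omega)]

lemma prod_range_div_mul_eq_choose {n j : ℕ} (hjn : j < n) :
    (∏ i ∈ range j, ((n : ℚ) - i) / ((j : ℚ) + 1 - i)) * ((n : ℚ) - j) =
      n.choose (j + 1) := by
  have hden : ∏ i ∈ range j, ((j : ℚ) + 1 - i) = (j + 1)! := by
    have h := prod_range_cast_sub_eq_descFactorial (R := ℚ) (Nat.le_add_right j 1)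
    have h' := Nat.factorial_mul_descFactorial (Nat.le_add_right j 1)
    rw [Nat.add_sub_cancel_left, Nat.factorial_one, one_mul] at h'
    push_cast at h
    rw [h, h']
  have hnum : (n.descFactorial j : ℚ) * ((n : ℚ) - j) = (j + 1)! * n.choose (j + 1) := by
    rw [← Nat.cast_sub hjn.le, ← Nat.cast_mul, mul_comm, ← Nat.descFactorial_succ,
      Nat.descFactorial_eq_factorial_mul_choose, Nat.cast_mul]
  rw [prod_div_distrib, prod_range_cast_sub_eq_descFactorial hjn.le, hden]
  field_simp
  linarith

lemma choose_sq_sub_choose_mul_choose {n k : ℕ} (hk : 0 < k) (hkn : k ≤ n) :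
    (n.choose k : ℚ) ^ 2 - n.choose (k - 1) * n.choose (k + 1) =
      ((n + 1) * (n - k + 1) / (k + 1)) *
        (∏ i ∈ range (k - 1), ((n : ℚ) - i) / ((k : ℚ) - i)) ^ 2 := by
  obtain ⟨j, rfl⟩ : ∃ j, k = j + 1 := ⟨k - 1, by omega⟩
  have hP := prod_range_div_mul_eq_choose (n := n) (j := j) (by omega)
  have h1 := congrArg (Nat.cast : ℕ → ℚ) (Nat.choose_succ_right_eq n j)
  have h2 := congrArg (Nat.cast : ℕ → ℚ) (Nat.choose_succ_right_eq n (j + 1))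
  push_cast [Nat.cast_sub (by omega : j ≤ n), Nat.cast_sub (by omega : j + 1 ≤ n)] at h1 h2 ⊢
  set P := ∏ i ∈ range j, ((n : ℚ) - i) / ((j : ℚ) + 1 - i)
  have hnj : (n : ℚ) - j ≠ 0 := sub_ne_zero.2 (by norm_cast; omega)
  rw [div_mul_eq_mul_div, eq_div_iff (by positivity)]
  apply mul_right_cancel₀ hnj
  -- with `c = C(n,j+1)`: `h1`, `h2` express both neighbours through `c`, and
  -- `(j+2)(n-j) - (j+1)(n-j-1) = n+1`
  linear_combination (-(n.choose j : ℚ) * (n - j)) * h2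
    + (n.choose (j + 1) : ℚ) * (n - j - 1) * h1 - (n + 1) * (P * (n - j) + n.choose (j + 1)) * hP

/-- The number of semi-standard Young tableaux of shape `k × 2` (pairs of
componentwise comparable `k`-subsets of `{1,…,n}`, encoded as pairs of strictly
increasing functions `Fin k → Fin n` with pointwise `≤`) is given by the
hook-content formula specialization. -/
theorem stmt_0 (n k : ℕ) (hk : 1 ≤ k) (hkn : k ≤ n) :
    (Nat.card {p : (Fin k → Fin n) × (Fin k → Fin n) //
        StrictMono p.1 ∧ StrictMono p.2 ∧ ∀ i, p.1 i ≤ p.2 i} : ℚ) =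
      (((n : ℚ) + 1) * ((n : ℚ) - k + 1) / ((k : ℚ) + 1)) *
        ∏ i ∈ Finset.range (k - 1), (((n : ℚ) - i) ^ 2 / ((k : ℚ) - i) ^ 2) := by
  have hcount :=
    congrArg (Nat.cast : ℕ → ℚ) (TwoColumnSSYT.card_filter_dominates_add (n := n) hk)
  rw [← TwoColumnSSYT.card_tableaux] at hcount
  push_cast at hcount
  simp_rw [← div_pow, prod_pow]
  rw [← choose_sq_sub_choose_mul_choose hk hkn]
  linear_combination hcount
end

section
/- The linear forms L_I = Σ_{J ∈ C([n],r+1), J∩I=∅} s_{I∪J} (indexed by (k−r−1)-subsets I of [n]), viewed as linear forms in the variables s_K for k-subsets K, are linearly independent; hence they cut out a linear subspace of ℙ^{C(n,k)−1} of dimension C(n,k) − 1 − C(n,k−r−1). -/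
/-!
Fix `I₀` and evaluate a vanishing combination `∑ g_I L_I` at the indicator of
`{K : |K ∩ I₀| = i}`. There `L_I` counts the `(r+1)`-sets `J` disjoint from `I` with
`|(I ∪ J) ∩ I₀| = i`; this number depends only on `j = |I ∩ I₀|`, vanishes for `i < j`, and is
nonzero for `i = j` because `|I₀| + k ≤ n`. So the fibre sums `G_j = ∑_{|I ∩ I₀| = j} g_I`
solve a lower triangular system with nonzero diagonal, hence vanish, and `G_{k-r-1} = g_{I₀}`.
-/

/-- The momentum-conservation linear form `L_I`, indexed by a
`(k−r−1)`-subset `I` of `[n]`: the sum of the variables `s_{I∪J}` over all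
`(r+1)`-subsets `J` disjoint from `I`, viewed as a functional on the space of
vectors `s` indexed by `k`-subsets. -/
noncomputable def momentumForm (n k r : ℕ) (hrk : r + 1 ≤ k)
    (I : {I : Finset (Fin n) // I.card = k - r - 1}) :
    ({K : Finset (Fin n) // K.card = k} → ℚ) → ℚ :=
  fun s => ∑ J : {J : Finset (Fin n) // J.card = r + 1},
    if h : Disjoint I.1 J.1 then
      s ⟨I.1 ∪ J.1, by rw [Finset.card_union_of_disjoint h, I.2, J.2]; omega⟩
    else 0

open Finset

section Counting

variable {α : Type*} [DecidableEq α]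

theorem card_filter_card_inter_powersetCard {U P : Finset α} (hPU : P ⊆ U) {a b : ℕ}
    (hba : b ≤ a) :
    #{L ∈ U.powersetCard a | #(L ∩ P) = b} = (#P).choose b * (#U - #P).choose (a - b) := by
  rw [← card_sdiff_of_subset hPU, ← card_powersetCard, ← card_powersetCard, ← card_product]
  refine card_nbij' (fun L => (L ∩ P, L \ P)) (fun p => p.1 ∪ p.2) ?_ ?_ ?_ ?_
  · intro L hL
    simp only [coe_filter, mem_powersetCard, Set.mem_ofPred_eq, coe_product, Set.mem_prod,
      mem_coe] at hL ⊢
    refine ⟨⟨inter_subset_right, hL.2⟩, sdiff_subset_sdiff hL.1.1 le_rfl, ?_⟩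
    have := card_sdiff_add_card_inter L P
    omega
  · rintro ⟨S, T⟩ h
    simp only [coe_filter, mem_powersetCard, Set.mem_ofPred_eq, coe_product, Set.mem_prod,
      mem_coe] at h ⊢
    obtain ⟨⟨hSP, hS⟩, hTU, hT⟩ := h
    have hdisj : Disjoint S T := disjoint_of_subset_left hSP (subset_sdiff.mp hTU).2.symm
    refine ⟨⟨union_subset (hSP.trans hPU) (hTU.trans sdiff_subset), ?_⟩, ?_⟩
    · rw [card_union_of_disjoint hdisj]
      omega
    · have : (S ∪ T) ∩ P = S := by grind
      rw [this, hS]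
  · intro L _
    exact sup_inf_sdiff L P
  · rintro ⟨S, T⟩ h
    simp only [coe_product, Set.mem_prod, mem_coe, mem_powersetCard] at h
    simp only [Prod.mk.injEq]
    grind

theorem card_union_inter_of_disjoint {I J : Finset α} (P : Finset α) (hIJ : Disjoint I J) :
    #((I ∪ J) ∩ P) = #(I ∩ P) + #(J ∩ (P \ I)) := by
  rw [disjoint_left] at hIJ
  rw [union_inter_distrib_right, card_union_of_disjoint]
  · congr 2
    grind
  · rw [disjoint_left]
    grind

theorem card_inter_eq_iff_eq {s t : Finset α} {m : ℕ} (hs : #s = m) (ht : #t = m) :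
    #(s ∩ t) = m ↔ s = t := by
  constructor
  · intro h
    have hst : s ⊆ t :=
      inter_eq_left.mp (eq_of_subset_of_card_le inter_subset_left (hs.trans h.symm).le)
    exact eq_of_subset_of_card_le hst (ht.trans hs.symm).le
  · rintro rfl
    rw [inter_self, hs]

theorem card_filter_card_union_inter_powersetCard_compl [Fintype α] (I P : Finset α) (c i : ℕ) :
    #{J ∈ Iᶜ.powersetCard c | #((I ∪ J) ∩ P) = i} =
      if #(I ∩ P) ≤ i ∧ i ≤ #(I ∩ P) + c then
        (#P - #(I ∩ P)).choose (i - #(I ∩ P)) *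
          (Fintype.card α - #I - (#P - #(I ∩ P))).choose (c - (i - #(I ∩ P)))
      else 0 := by
  have hsplit : ∀ J ∈ Iᶜ.powersetCard c, #((I ∪ J) ∩ P) = #(I ∩ P) + #(J ∩ (P \ I)) :=
    fun J hJ => card_union_inter_of_disjoint P
      (subset_compl_iff_disjoint_left.mp (mem_powersetCard.mp hJ).1)
  have hPI : #(P \ I) = #P - #(I ∩ P) := card_sdiff
  split_ifs with hi
  · rw [filter_congr (q := fun J => #(J ∩ (P \ I)) = i - #(I ∩ P))
        (fun J hJ => by rw [hsplit J hJ]; omega),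
      card_filter_card_inter_powersetCard (fun x hx => mem_compl.2 (mem_sdiff.1 hx).2)
        (by omega), card_compl, hPI]
  · refine card_eq_zero.mpr (filter_eq_empty_iff.mpr fun J hJ => ?_)
    have : #(J ∩ (P \ I)) ≤ c := (mem_powersetCard.mp hJ).2 ▸ card_le_card inter_subset_left
    rw [hsplit J hJ]
    omega

end Counting

theorem eq_zero_of_lowerTriangular {R : Type*} [CommRing R] [NoZeroDivisors R] {m : ℕ}
    (N : ℕ → ℕ → R) (G : ℕ → R) (htri : ∀ i j, i < j → N i j = 0)
    (hdiag : ∀ i ≤ m, N i i ≠ 0) (h : ∀ i ≤ m, ∑ j ∈ range (m + 1), N i j * G j = 0) :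
    ∀ j ≤ m, G j = 0 := by
  intro j
  induction j using Nat.strong_induction_on with
  | _ j ih =>
    intro hj
    have hsum : ∑ j' ∈ range (m + 1), N j j' * G j' = N j j * G j := by
      refine sum_eq_single j (fun j' _ hne => ?_) (by simp; omega)
      rcases lt_or_gt_of_ne hne with hlt | hgt
      · rw [ih j' hlt (by omega), mul_zero]
      · rw [htri j j' hgt, zero_mul]
    exact (mul_eq_zero.mp (hsum ▸ h j hj)).resolve_left (hdiag j hj)

theorem momentumForm_apply_val {n k r : ℕ} (hrk : r + 1 ≤ k)
    (I : {I : Finset (Fin n) // #I = k - r - 1}) (f : Finset (Fin n) → ℚ) :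
    momentumForm n k r hrk I (fun K => f K.1) =
      ∑ J ∈ I.1ᶜ.powersetCard (r + 1), f (I.1 ∪ J) := by
  simp only [momentumForm, dite_eq_ite]
  rw [← sum_subtype (univ.powersetCard (r + 1)) (by simp)
    (fun J => if Disjoint I.1 J then f (I.1 ∪ J) else 0), ← sum_filter]
  congr 1
  ext J
  simp [subset_compl_iff_disjoint_left, and_comm]

theorem linearIndependent_momentumForm {n k r : ℕ} (hrk : r + 1 ≤ k)
    (hkn : k + (k - r - 1) ≤ n) : LinearIndependent ℚ (momentumForm n k r hrk) := by
  rw [Fintype.linearIndependent_iff]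
  intro g hg I₀
  let N : ℕ → ℕ → ℚ := fun i j => ((if j ≤ i ∧ i ≤ j + (r + 1) then
    (k - r - 1 - j).choose (i - j) * (n - (k - r - 1) - (k - r - 1 - j)).choose (r + 1 - (i - j))
    else 0 : ℕ) : ℚ)
  let G : ℕ → ℚ := fun j => ∑ I with #(I.1 ∩ I₀.1) = j, g I
  have hform (I : {I : Finset (Fin n) // #I = k - r - 1}) (i : ℕ) :
      momentumForm n k r hrk I (fun K => if #(K.1 ∩ I₀.1) = i then 1 else 0) =
        N i #(I.1 ∩ I₀.1) := by
    rw [momentumForm_apply_val hrk I (fun K => if #(K ∩ I₀.1) = i then 1 else 0), sum_boole,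
      card_filter_card_union_inter_powersetCard_compl, Fintype.card_fin, I.2, I₀.2]
  have hsys : ∀ i ≤ k - r - 1, ∑ j ∈ range (k - r - 1 + 1), N i j * G j = 0 := by
    intro i _
    have hmaps : ∀ I ∈ (univ : Finset {I : Finset (Fin n) // #I = k - r - 1}),
        #(I.1 ∩ I₀.1) ∈ range (k - r - 1 + 1) := fun I _ =>
      mem_range_succ_iff.mpr ((card_le_card inter_subset_left).trans_eq I.2)
    have := congrFun hg (fun K => if #(K.1 ∩ I₀.1) = i then 1 else 0)
    simp only [Finset.sum_apply, Pi.smul_apply, smul_eq_mul, hform, Pi.zero_apply] at this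
    rw [← sum_fiberwise_of_maps_to hmaps] at this
    refine (sum_congr rfl fun j _ => ?_).trans this
    rw [mul_sum]
    exact sum_congr rfl fun I hI => by rw [(mem_filter.1 hI).2, mul_comm]
  have hGm := eq_zero_of_lowerTriangular N G (fun i j hij => by simp [N]; omega)
    (fun i hi => by simp [N, Nat.choose_eq_zero_iff]; omega) hsys _ le_rfl
  have hfiber (I : {I : Finset (Fin n) // #I = k - r - 1}) : #(I.1 ∩ I₀.1) = k - r - 1 ↔ I = I₀ :=
    (card_inter_eq_iff_eq I.2 I₀.2).trans Subtype.ext_iff.symm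
  simpa [G, hfiber, filter_eq'] using hGm

/-- The linear forms `L_I = Σ_{J} s_{I∪J}` are linearly independent; hence
they cut out a linear subspace of codimension `C(n, k−r−1)`, i.e. the span of
these forms has dimension `C(n, k−r−1)`. -/
theorem stmt_12 (n k r : ℕ) (hrk : r + 1 ≤ k) (h2 : 2 * k ≤ n + r) :
    LinearIndependent ℚ (momentumForm n k r hrk) ∧
    Module.finrank ℚ (Submodule.span ℚ (Set.range (momentumForm n k r hrk))) =
      n.choose (k - r - 1) := by
  have hli := linearIndependent_momentumForm hrk (by omega : k + (k - r - 1) ≤ n)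
  refine ⟨hli, ?_⟩
  rw [finrank_span_eq_card hli, Fintype.card_finset_len, Fintype.card_fin]
end
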